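/- Let σ₋ < ω₋ < ω₊ < ω₊' < σ₊ be real numbers, q ∈ ℂ with q ≠ 0, and x, h ∈ ℝ. Let φ⁺ and Ĝ be holomorphic on the strip {σ₋ < Im z < σ₊} with |φ⁺(z)·Ĝ(z)| ≤ C·(1 + |z|)^{−s} on the strip for some C > 0, s > 1. Let φ⁻ and ψ be continuous complex-valued functions on the line {Im ξ = ω₊} such that q + ψ(ξ) ≠ 0 and the Wiener–Hopf factorization identity φ⁺(ξ)·φ⁻(ξ)·(q + ψ(ξ)) = q holds for every ξ on this line. For ω ∈ {ω₋, ω₊'} define I_ω(ξ) = (1/(2πi))·∫_ℝ e^{i·h·(t + iω − ξ)}·φ⁺(t + iω)·Ĝ(t + iω)/(ξ − t − iω) dt. Assume that t ↦ e^{i·x·(t + iω₊)}·φ⁻(t + iω₊)·I_{ω₊'}(t + iω₊) and t ↦ e^{i·x·(t + iω₊)}·φ⁻(t + iω₊)·I_{ω₋}(t + iω₊) are Lebesgue integrable on ℝ. Then (1/(2πq))·∫_ℝ e^{i·x·(t + iω₊)}·φ⁻(t + iω₊)·I_{ω₊'}(t + iω₊) dt = (1/(2πq))·∫_ℝ e^{i·x·(t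 + iω₊)}·φ⁻(t + iω₊)·I_{ω₋}(t + iω₊) dt + (1/(2π))·∫_ℝ e^{i·x·(t + iω₊)}·Ĝ(t + iω₊)/(q + ψ(t + iω₊)) dt, the last integrand also being integrable. (The analytic core of Theorem 5.2: the Laplace–Fourier representation (eq:LTFT)+(eq:LTFTpr) of the no-touch option value q^{−1}·F^{−1}[φ⁻·Π⁺_h(φ⁺·Ĝ)], obtained by crossing the pole at η = ξ and applying the Wiener–Hopf factorization.) -/

import Mathlib

/-!
For `ξ` on the line `Im ξ = ω₊`, moving the line of integration in `I_ω` across the pole `η = ξ`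
picks up the residue: `I_{ω₊'}(ξ) - I_{ω₋}(ξ) = φ⁺(ξ) Ĝ(ξ)`. Multiplying by `φ⁻(ξ)` and using
`φ⁺ φ⁻ (q + ψ) = q` turns this into `q Ĝ(ξ) / (q + ψ(ξ))`, and integrating along the line gives
the claim.

The residue is computed on the rectangles `[-R, R] × [ω₋, ω₊']`. Writing the integrand as
`E(η) / (ξ - η)`, subtracting `E(ξ) / (ξ - η)` leaves `-dslope E ξ`, whose boundary integral
vanishes by Cauchy–Goursat. The kernel `1 / (ξ - η)` integrates to logarithms, and each horizontal
side contributes `∓πi` in the limit; the vertical sides vanish because `E` is bounded on the strip.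
-/

open MeasureTheory Set
open Complex Filter Topology
open scoped Real Interval

namespace Complex

theorem log_neg_of_im_neg {x : ℂ} (hx : x.im < 0) : log (-x) = log x + π * I := by
  apply Complex.ext <;> simp [log_re, log_im, arg_neg_eq_arg_add_pi_of_im_neg hx]

theorem log_neg_of_im_pos {x : ℂ} (hx : 0 < x.im) : log (-x) = log x - π * I := by
  apply Complex.ext <;> simp [log_re, log_im, arg_neg_eq_arg_sub_pi_of_im_pos hx]

theorem tendsto_log_add_sub_log_sub (c : ℂ) :
    Tendsto (fun R : ℝ => log (R + c) - log (R - c)) atTop (𝓝 0) := by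
  have hlim : Tendsto (fun R : ℝ => c * ((R⁻¹ : ℝ) : ℂ)) atTop (𝓝 0) := by
    simpa using (tendsto_inv_atTop_zero.ofReal).const_mul c
  have hcont : ContinuousAt (fun w : ℂ => log (1 + w) - log (1 - w)) 0 := by
    refine ((continuousAt_clog ?_).comp ?_).sub ((continuousAt_clog ?_).comp ?_) <;>
      first | fun_prop | simp
  have := (hcont.tendsto.comp hlim)
  simp only [add_zero, sub_zero, log_one, sub_self] at this
  refine this.congr' ?_
  filter_upwards [eventually_gt_atTop ‖c‖] with R hcR
  have hR : 0 < R := (norm_nonneg c).trans_lt hcR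
  have hsmall : ‖c * ((R⁻¹ : ℝ) : ℂ)‖ < 1 := by
    rw [norm_mul, norm_real, Real.norm_of_nonneg (inv_nonneg.2 hR.le), ← div_eq_mul_inv,
      div_lt_one hR]
    exact hcR
  have hadd : 1 + c * ((R⁻¹ : ℝ) : ℂ) ≠ 0 := by
    intro h0; rw [← neg_eq_of_add_eq_zero_right h0] at hsmall; simp at hsmall
  have hsub : 1 - c * ((R⁻¹ : ℝ) : ℂ) ≠ 0 := by
    intro h0; rw [← sub_eq_zero.1 h0] at hsmall; simp at hsmall
  have hR0 : (R : ℂ) ≠ 0 := by exact_mod_cast hR.ne'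
  have eadd : (R : ℂ) + c = R * (1 + c * ((R⁻¹ : ℝ) : ℂ)) := by
    push_cast; field_simp
  have esub : (R : ℂ) - c = R * (1 - c * ((R⁻¹ : ℝ) : ℂ)) := by
    push_cast; field_simp
  simp only [Function.comp_apply, eadd, esub, log_ofReal_mul hR hadd, log_ofReal_mul hR hsub]
  ring

theorem integral_inv_sub_ofReal {c : ℂ} (hc : c.im ≠ 0) (a b : ℝ) :
    ∫ t in a..b, (c - t)⁻¹ = log (c - a) - log (c - b) := by
  have hslit : ∀ t : ℝ, c - t ∈ slitPlane := fun t => Or.inr (by simpa using hc)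
  have hderiv : ∀ t ∈ uIcc a b, HasDerivAt (fun t : ℝ => -log (c - t)) (c - t)⁻¹ t := by
    intro t _
    have := (((hasDerivAt_id (t : ℂ)).const_sub c).clog (hslit t)).neg.comp_ofReal
    simpa [neg_div, one_div] using this
  have hcont : Continuous fun t : ℝ => (c - t)⁻¹ :=
    (continuous_const.sub continuous_ofReal).inv₀ fun t => slitPlane_ne_zero (hslit t)
  rw [intervalIntegral.integral_eq_sub_of_hasDerivAt hderiv (hcont.intervalIntegrable a b)]
  ring

theorem tendsto_integral_inv_sub_ofReal_of_im_pos {c : ℂ} (hc : 0 < c.im) :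
    Tendsto (fun R : ℝ => ∫ t in -R..R, (c - t)⁻¹) atTop (𝓝 (-(π * I))) := by
  have key : ∀ R : ℝ, ∫ t in -R..R, (c - t)⁻¹ = log (R + c) - log (R - c) - π * I := by
    intro R
    rw [integral_inv_sub_ofReal hc.ne', show c - R = -(R - c) by ring,
      log_neg_of_im_neg (by simpa using hc)]
    push_cast
    ring_nf
  simpa [key] using (tendsto_log_add_sub_log_sub c).sub_const (π * I)

theorem tendsto_integral_inv_sub_ofReal_of_im_neg {c : ℂ} (hc : c.im < 0) :
    Tendsto (fun R : ℝ => ∫ t in -R..R, (c - t)⁻¹) atTop (𝓝 (π * I)) := by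
  have key : ∀ R : ℝ, ∫ t in -R..R, (c - t)⁻¹ = log (R + c) - log (R - c) + π * I := by
    intro R
    rw [integral_inv_sub_ofReal hc.ne, show c - R = -(R - c) by ring,
      log_neg_of_im_pos (by simpa using hc)]
    push_cast
    ring_nf
  simpa [key] using (tendsto_log_add_sub_log_sub c).add_const (π * I)

end Complex

noncomputable def rectIntegral (f : ℂ → ℂ) (R a b : ℝ) : ℂ :=
  (∫ t in -R..R, f (t + a * I)) - (∫ t in -R..R, f (t + b * I))
    + I * (∫ y in a..b, f (R + y * I)) - I * ∫ y in a..b, f (-R + y * I)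

theorem rectIntegral_eq_zero_of_differentiable_on_off_countable {f : ℂ → ℂ} {R a b : ℝ}
    {s : Set ℂ} (hRR : -R ≤ R) (hab : a ≤ b) (hs : s.Countable)
    (hc : ContinuousOn f ([[-R, R]] ×ℂ [[a, b]]))
    (hd : ∀ z ∈ Ioo (-R) R ×ℂ Ioo a b \ s, DifferentiableAt ℂ f z) :
    rectIntegral f R a b = 0 := by
  have := integral_boundary_rect_eq_zero_of_differentiable_on_off_countable f
    (-R + a * I) (R + b * I) s hs (by simpa using hc) (by simpa [hRR, hab] using hd)
  simpa [rectIntegral] using this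

theorem intervalIntegral_div_sub_eq_mul_sub_dslope {E : ℂ → ℂ} {ξ : ℂ} {s : Set ℂ} {p q : ℝ}
    {γ : ℝ → ℂ} (hc : ContinuousOn (dslope E ξ) s) (hγ : Continuous γ)
    (hmaps : MapsTo γ [[p, q]] s) (hne : ∀ y ∈ [[p, q]], γ y ≠ ξ) :
    ∫ y in p..q, E (γ y) / (ξ - γ y)
      = E ξ * (∫ y in p..q, 1 / (ξ - γ y)) - ∫ y in p..q, dslope E ξ (γ y) := by
  have hK : ContinuousOn (fun y => 1 / (ξ - γ y)) [[p, q]] :=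
    continuousOn_const.div (continuousOn_const.sub hγ.continuousOn) fun y hy =>
      sub_ne_zero.2 (hne y hy).symm
  have hG : IntervalIntegrable (fun y => dslope E ξ (γ y)) volume p q :=
    (hc.comp hγ.continuousOn hmaps).intervalIntegrable
  rw [← intervalIntegral.integral_const_mul,
    ← intervalIntegral.integral_sub (hK.intervalIntegrable.const_mul _) hG]
  refine intervalIntegral.integral_congr fun y hy => ?_
  have h₁ : γ y - ξ ≠ 0 := sub_ne_zero.2 (hne y hy)
  have h₂ : ξ - γ y ≠ 0 := sub_ne_zero.2 (hne y hy).symm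
  simp only [dslope_of_ne E (hne y hy), slope_def_field]
  field_simp
  ring

theorem rectIntegral_div_sub (E : ℂ → ℂ) {ξ : ℂ} {R a b : ℝ} (hR : |ξ.re| < R)
    (ha : a < ξ.im) (hb : ξ.im < b) (hc : ContinuousOn E ([[-R, R]] ×ℂ [[a, b]]))
    (hd : DifferentiableOn ℂ E (Ioo (-R) R ×ℂ Ioo a b)) :
    rectIntegral (fun z => E z / (ξ - z)) R a b
      = E ξ * rectIntegral (fun z => 1 / (ξ - z)) R a b := by
  have hR0 : 0 ≤ R := (abs_nonneg _).trans hR.le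
  have hopen : IsOpen (Ioo (-R) R ×ℂ Ioo a b) := isOpen_Ioo.reProdIm isOpen_Ioo
  have hξ : Ioo (-R) R ×ℂ Ioo a b ∈ 𝓝 ξ := hopen.mem_nhds ⟨abs_lt.1 hR, ha, hb⟩
  have hinner : Ioo (-R) R ×ℂ Ioo a b ⊆ [[-R, R]] ×ℂ [[a, b]] := fun z hz =>
    ⟨Ioo_subset_Icc_self.trans Icc_subset_uIcc hz.1, Ioo_subset_Icc_self.trans Icc_subset_uIcc hz.2⟩
  have hGc : ContinuousOn (dslope E ξ) ([[-R, R]] ×ℂ [[a, b]]) :=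
    (continuousOn_dslope (mem_of_superset hξ hinner)).2 ⟨hc, hd.differentiableAt hξ⟩
  have hG : rectIntegral (dslope E ξ) R a b = 0 :=
    rectIntegral_eq_zero_of_differentiable_on_off_countable (by linarith) (ha.trans hb).le
      (countable_singleton ξ) hGc fun z hz =>
        (differentiableAt_dslope_of_ne hz.2).2 (hd.differentiableAt (hopen.mem_nhds hz.1))
  have hside : ∀ z : ℂ, |z.re| = R → z ≠ ξ := by
    rintro z hz rfl
    exact hR.ne hz
  have hhor : ∀ z : ℂ, z.im ≠ ξ.im → z ≠ ξ := by
    rintro z hz rfl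
    exact hz rfl
  have hbot := intervalIntegral_div_sub_eq_mul_sub_dslope (γ := fun t : ℝ => t + a * I) hGc
    (by fun_prop) (fun t ht => by simpa [mem_reProdIm] using ht)
    fun t _ => hhor _ (by simpa using ha.ne)
  have htop := intervalIntegral_div_sub_eq_mul_sub_dslope (γ := fun t : ℝ => t + b * I) hGc
    (by fun_prop) (fun t ht => by simpa [mem_reProdIm] using ht)
    fun t _ => hhor _ (by simpa using hb.ne')
  have hright := intervalIntegral_div_sub_eq_mul_sub_dslope (γ := fun y : ℝ => R + y * I) hGc
    (by fun_prop) (fun y hy => by simpa [mem_reProdIm] using hy)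
    fun y _ => hside _ (by simpa using hR0)
  have hleft := intervalIntegral_div_sub_eq_mul_sub_dslope (γ := fun y : ℝ => -R + y * I) hGc
    (by fun_prop) (fun y hy => by simpa [mem_reProdIm] using hy)
    fun y _ => hside _ (by simpa using hR0)
  simp only [rectIntegral] at hG ⊢
  rw [hbot, htop, hright, hleft]
  linear_combination -hG

theorem tendsto_rectIntegral {f : ℂ → ℂ} {a b : ℝ} {A B : ℂ}
    (hA : Tendsto (fun R : ℝ => ∫ t in -R..R, f (t + a * I)) atTop (𝓝 A))
    (hB : Tendsto (fun R : ℝ => ∫ t in -R..R, f (t + b * I)) atTop (𝓝 B))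
    (hV : Tendsto (fun x : ℝ => ∫ y in a..b, f (x + y * I)) (cocompact ℝ) (𝓝 0)) :
    Tendsto (rectIntegral f · a b) atTop (𝓝 (A - B)) := by
  have hright := hV.mono_left atTop_le_cocompact
  have hleft := hV.comp (tendsto_neg_atTop_atBot.mono_right atBot_le_cocompact)
  simpa [rectIntegral, Function.comp_def] using
    ((hA.sub hB).add (hright.const_mul I)).sub (hleft.const_mul I)

theorem tendsto_integral_div_sub_cocompact {E : ℂ → ℂ} {a b M : ℝ} (ξ : ℂ)
    (hM : ∀ z : ℂ, z.im ∈ [[a, b]] → ‖E z‖ ≤ M) :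
    Tendsto (fun x : ℝ => ∫ y in a..b, E (x + y * I) / (ξ - (x + y * I)))
      (cocompact ℝ) (𝓝 0) := by
  have hM0 : 0 ≤ M := (norm_nonneg _).trans (hM (a * I) (by simp))
  have hdist : Tendsto (fun x : ℝ => |x - ξ.re|) (cocompact ℝ) atTop := by
    refine tendsto_atTop_mono (fun x => ?_)
      (tendsto_atTop_add_const_right _ (-|ξ.re|) tendsto_norm_cocompact_atTop)
    simpa [Real.norm_eq_abs, ← sub_eq_add_neg] using abs_sub_abs_le_abs_sub x ξ.re
  have hlim : Tendsto (fun x : ℝ => M * |x - ξ.re|⁻¹ * |b - a|) (cocompact ℝ) (𝓝 0) := by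
    simpa using (hdist.inv_tendsto_atTop.const_mul M).mul_const |b - a|
  refine squeeze_zero_norm' ?_ hlim
  filter_upwards [hdist.eventually_gt_atTop 0] with x hx
  refine intervalIntegral.norm_integral_le_of_norm_le_const fun y hy => ?_
  have hre : |x - ξ.re| ≤ ‖ξ - (x + y * I)‖ := by
    simpa [abs_sub_comm] using abs_re_le_norm (ξ - (x + y * I))
  rw [norm_div, div_eq_mul_inv]
  exact mul_le_mul (hM _ (by simpa using uIoc_subset_uIcc hy)) (inv_anti₀ hx hre)
    (by positivity) hM0

theorem integrable_div_sub_add_mul_I {E : ℂ → ℂ} {ω : ℝ} {ξ : ℂ}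
    (hE : Integrable fun t : ℝ => E (t + ω * I)) (hω : ω ≠ ξ.im) :
    Integrable fun t : ℝ => E (t + ω * I) / (ξ - (t + ω * I)) := by
  have hne : ∀ t : ℝ, ξ - (t + ω * I) ≠ 0 := fun t h => by
    have := congrArg im h
    simp only [sub_im, add_im, ofReal_im, mul_im, ofReal_re, I_re, I_im, zero_im] at this
    exact hω (by linarith)
  have hd : 0 < |ξ.im - ω| := abs_pos.2 (sub_ne_zero.2 hω.symm)
  refine hE.mul_bdd (c := |ξ.im - ω|⁻¹) ?_ (.of_forall fun t => ?_)
  · exact ((continuous_const.sub (by fun_prop)).inv₀ hne).aestronglyMeasurable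
  · rw [norm_inv]
    exact inv_anti₀ hd (by simpa using abs_im_le_norm (ξ - (t + ω * I)))

theorem integral_div_sub_sub_integral_div_sub {E : ℂ → ℂ} {a b M : ℝ} {ξ : ℂ}
    (ha : a < ξ.im) (hb : ξ.im < b) (hc : ContinuousOn E (im ⁻¹' Icc a b))
    (hd : DifferentiableOn ℂ E (im ⁻¹' Ioo a b)) (hM : ∀ z ∈ im ⁻¹' Icc a b, ‖E z‖ ≤ M)
    (hia : Integrable fun t : ℝ => E (t + a * I)) (hib : Integrable fun t : ℝ => E (t + b * I)) :
    (∫ t : ℝ, E (t + b * I) / (ξ - (t + b * I)))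
      - ∫ t : ℝ, E (t + a * I) / (ξ - (t + a * I)) = 2 * π * I * E ξ := by
  have hab : a ≤ b := (ha.trans hb).le
  have hF := tendsto_rectIntegral (f := fun z => E z / (ξ - z))
    (intervalIntegral_tendsto_integral (integrable_div_sub_add_mul_I hia ha.ne)
      tendsto_neg_atTop_atBot tendsto_id)
    (intervalIntegral_tendsto_integral (integrable_div_sub_add_mul_I hib hb.ne')
      tendsto_neg_atTop_atBot tendsto_id)
    (tendsto_integral_div_sub_cocompact ξ fun z hz => hM z (by simpa [uIcc_of_le hab] using hz))
  have hkernel : ∀ (ω R : ℝ), ∫ t in -R..R, 1 / (ξ - (t + ω * I))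
      = ∫ t in -R..R, (ξ - ω * I - t)⁻¹ :=
    fun ω R => intervalIntegral.integral_congr fun t _ => by ring
  have hK := tendsto_rectIntegral (f := fun z => 1 / (ξ - z))
    ((tendsto_integral_inv_sub_ofReal_of_im_pos (c := ξ - a * I) (by simpa using ha)).congr
      fun R => (hkernel a R).symm)
    ((tendsto_integral_inv_sub_ofReal_of_im_neg (c := ξ - b * I) (by simpa using hb)).congr
      fun R => (hkernel b R).symm)
    (tendsto_integral_div_sub_cocompact (E := fun _ => 1) (M := 1) ξ (by simp))
  have hcauchy : ∀ᶠ R in atTop, rectIntegral (fun z => E z / (ξ - z)) R a b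
      = E ξ * rectIntegral (fun z => 1 / (ξ - z)) R a b := by
    filter_upwards [eventually_gt_atTop |ξ.re|] with R hR
    refine rectIntegral_div_sub E hR ha hb (hc.mono fun z hz => ?_) (hd.mono fun z hz => hz.2)
    simpa [uIcc_of_le hab] using hz.2
  have := tendsto_nhds_unique (hF.congr' hcauchy) (hK.const_mul (E ξ))
  linear_combination -this

theorem norm_cexp_I_mul_ofReal_mul (h : ℝ) (z : ℂ) :
    ‖cexp (I * h * z)‖ = Real.exp (-(h * z.im)) := by
  simp [norm_exp, mul_re, mul_im]

theorem integrable_ofReal_add_mul_I_of_norm_le {f : ℂ → ℂ} {ω C s : ℝ} (hs : 1 < s)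
    (hf : Continuous fun t : ℝ => f (t + ω * I))
    (hbound : ∀ t : ℝ, ‖f (t + ω * I)‖ ≤ C * (1 + ‖(t : ℂ) + ω * I‖) ^ (-s)) :
    Integrable fun t : ℝ => f (t + ω * I) := by
  have hC : 0 ≤ C := nonneg_of_mul_nonneg_left ((norm_nonneg _).trans (hbound 0)) (by positivity)
  refine ((integrable_one_add_norm (E := ℝ) (μ := volume) (by simpa using hs)).const_mul C).mono'
    hf.aestronglyMeasurable (.of_forall fun t => (hbound t).trans ?_)
  refine mul_le_mul_of_nonneg_left (Real.rpow_le_rpow_of_nonpos (by positivity) ?_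
    (by linarith)) hC
  simpa using abs_re_le_norm (t + ω * I : ℂ)

theorem integral_cexp_mul_div_sub_sub {f : ℂ → ℂ} {σm σp a b C s : ℝ} (h : ℝ) {ξ : ℂ}
    (hs : 1 < s) (hf : DifferentiableOn ℂ f {z : ℂ | σm < z.im ∧ z.im < σp})
    (hbound : ∀ z : ℂ, σm < z.im → z.im < σp → ‖f z‖ ≤ C * (1 + ‖z‖) ^ (-s))
    (hσa : σm < a) (ha : a < ξ.im) (hb : ξ.im < b) (hbσ : b < σp) :
    (∫ t : ℝ, cexp (I * h * (t + b * I - ξ)) * f (t + b * I) / (ξ - t - b * I))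
      - ∫ t : ℝ, cexp (I * h * (t + a * I - ξ)) * f (t + a * I) / (ξ - t - a * I)
      = 2 * π * I * f ξ := by
  set S := {z : ℂ | σm < z.im ∧ z.im < σp}
  set E := fun z => cexp (I * h * (z - ξ)) * f z with hE
  have hES : DifferentiableOn ℂ E S := by
    simp only [hE]
    exact (Differentiable.differentiableOn (by fun_prop)).mul hf
  have hclosed : im ⁻¹' Icc a b ⊆ S := fun z hz => ⟨hσa.trans_le hz.1, hz.2.trans_lt hbσ⟩
  have haσ : a < σp := by linarith
  have hC : 0 ≤ C := nonneg_of_mul_nonneg_left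
    ((norm_nonneg _).trans (hbound (a * I) (by simpa using hσa) (by simpa using haσ)))
    (by positivity)
  have hfC : ∀ z ∈ S, ‖f z‖ ≤ C := fun z hz => (hbound z hz.1 hz.2).trans
    (mul_le_of_le_one_right hC
      (Real.rpow_le_one_of_one_le_of_nonpos (by simp) (by linarith)))
  -- `‖cexp (I * h * (z - ξ))‖` depends only on `z.im`, hence is bounded on the closed strip.
  obtain ⟨K, hK⟩ := (isCompact_Icc (a := a) (b := b)).exists_bound_of_continuousOn
    (f := fun y : ℝ => Real.exp (-(h * (y - ξ.im)))) (by fun_prop)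
  have hM : ∀ z ∈ im ⁻¹' Icc a b, ‖E z‖ ≤ K * C := by
    intro z hz
    rw [hE, norm_mul, norm_cexp_I_mul_ofReal_mul, sub_im]
    exact mul_le_mul ((le_abs_self _).trans (hK _ hz)) (hfC z (hclosed hz)) (norm_nonneg _)
      ((abs_nonneg _).trans (hK _ hz))
  have hline : ∀ ω : ℝ, σm < ω → ω < σp → Integrable fun t : ℝ => E (t + ω * I) := by
    intro ω hσω hωσ
    have hmem : ∀ t : ℝ, (t + ω * I : ℂ) ∈ S := fun t => ⟨by simpa using hσω, by simpa using hωσ⟩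
    have hdecay := integrable_ofReal_add_mul_I_of_norm_le hs
      (hf.continuousOn.comp_continuous (by fun_prop) hmem) fun t => hbound _ (hmem t).1 (hmem t).2
    have hcont : Continuous fun t : ℝ => cexp (I * h * (t + ω * I - ξ)) := by fun_prop
    refine hdecay.bdd_mul (c := Real.exp (-(h * (ω - ξ.im)))) hcont.aestronglyMeasurable
      (.of_forall fun t => ?_)
    simp [norm_cexp_I_mul_ofReal_mul]
  have := integral_div_sub_sub_integral_div_sub ha hb (hES.continuousOn.mono hclosed)
    (hES.mono fun z hz => hclosed (Ioo_subset_Icc_self hz)) hM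
    (hline a hσa (by linarith)) (hline b (by linarith) hbσ)
  simpa [hE, sub_add_eq_sub_sub] using this

theorem integrable_and_integral_eq_add_mul_of_sub_eq_mul {α : Type*} [MeasurableSpace α]
    {μ : Measure α} {u v w : α → ℂ} {q : ℂ} (hq : q ≠ 0) (hu : Integrable u μ)
    (hv : Integrable v μ) (huvw : ∀ t, u t - v t = q * w t) :
    Integrable w μ ∧ ∫ t, u t ∂μ = (∫ t, v t ∂μ) + q * ∫ t, w t ∂μ := by
  have hw : w = fun t => q⁻¹ * (u t - v t) := by
    ext t
    rw [huvw, inv_mul_cancel_left₀ hq]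
  refine ⟨hw ▸ (hu.sub hv).const_mul q⁻¹, ?_⟩
  rw [← integral_const_mul, ← sub_eq_iff_eq_add', ← integral_sub hu hv]
  exact integral_congr_ae (.of_forall huvw)

theorem stmt_15_general (σm ωm ωp ωp' σp : ℝ)
    (h₁ : σm < ωm) (h₂ : ωm < ωp) (h₃ : ωp < ωp') (h₄ : ωp' < σp)
    (q : ℂ) (hq : q ≠ 0) (x h : ℝ)
    (φp Ghat : ℂ → ℂ) (C s : ℝ) (hs : 1 < s)
    (hφp : DifferentiableOn ℂ φp {z : ℂ | σm < z.im ∧ z.im < σp})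
    (hGhat : DifferentiableOn ℂ Ghat {z : ℂ | σm < z.im ∧ z.im < σp})
    (hbound : ∀ z : ℂ, σm < z.im → z.im < σp →
      ‖φp z * Ghat z‖ ≤ C * (1 + ‖z‖) ^ (-s))
    (φm ψ : ℂ → ℂ)
    (hne : ∀ ξ : ℂ, ξ.im = ωp → q + ψ ξ ≠ 0)
    (hWH : ∀ ξ : ℂ, ξ.im = ωp → φp ξ * φm ξ * (q + ψ ξ) = q)
    (Iω : ℝ → ℂ → ℂ)
    (hI : ∀ (ω : ℝ) (ξ : ℂ), Iω ω ξ =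
      (2 * (Real.pi : ℂ) * Complex.I)⁻¹ *
        ∫ t : ℝ, Complex.exp (Complex.I * h * ((t : ℂ) + ω * Complex.I - ξ)) *
          φp ((t : ℂ) + ω * Complex.I) * Ghat ((t : ℂ) + ω * Complex.I) /
            (ξ - t - ω * Complex.I))
    (hint₁ : Integrable (fun t : ℝ =>
      Complex.exp (Complex.I * x * ((t : ℂ) + ωp * Complex.I)) *
        φm ((t : ℂ) + ωp * Complex.I) * Iω ωp' ((t : ℂ) + ωp * Complex.I)))
    (hint₂ : Integrable (fun t : ℝ =>
      Complex.exp (Complex.I * x * ((t : ℂ) + ωp * Complex.I)) *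
        φm ((t : ℂ) + ωp * Complex.I) * Iω ωm ((t : ℂ) + ωp * Complex.I))) :
    Integrable (fun t : ℝ =>
      Complex.exp (Complex.I * x * ((t : ℂ) + ωp * Complex.I)) *
        Ghat ((t : ℂ) + ωp * Complex.I) / (q + ψ ((t : ℂ) + ωp * Complex.I))) ∧
    (2 * (Real.pi : ℂ) * q)⁻¹ *
        (∫ t : ℝ, Complex.exp (Complex.I * x * ((t : ℂ) + ωp * Complex.I)) *
          φm ((t : ℂ) + ωp * Complex.I) * Iω ωp' ((t : ℂ) + ωp * Complex.I))
      = (2 * (Real.pi : ℂ) * q)⁻¹ *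
          (∫ t : ℝ, Complex.exp (Complex.I * x * ((t : ℂ) + ωp * Complex.I)) *
            φm ((t : ℂ) + ωp * Complex.I) * Iω ωm ((t : ℂ) + ωp * Complex.I))
        + (2 * (Real.pi : ℂ))⁻¹ *
            ∫ t : ℝ, Complex.exp (Complex.I * x * ((t : ℂ) + ωp * Complex.I)) *
              Ghat ((t : ℂ) + ωp * Complex.I) / (q + ψ ((t : ℂ) + ωp * Complex.I)) := by
  have hcross : ∀ ξ : ℂ, ξ.im = ωp → Iω ωp' ξ - Iω ωm ξ = φp ξ * Ghat ξ := by
    intro ξ hξ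
    have key := integral_cexp_mul_div_sub_sub h hs (hφp.mul hGhat) hbound h₁ (hξ ▸ h₂)
      (hξ ▸ h₃) h₄
    simp only [Pi.mul_apply, ← mul_assoc] at key
    rw [hI, hI, ← mul_sub, key]
    field_simp
  have hpoint : ∀ t : ℝ,
      cexp (I * x * (t + ωp * I)) * φm (t + ωp * I) * Iω ωp' (t + ωp * I)
        - cexp (I * x * (t + ωp * I)) * φm (t + ωp * I) * Iω ωm (t + ωp * I)
      = q * (cexp (I * x * (t + ωp * I)) * Ghat (t + ωp * I) / (q + ψ (t + ωp * I))) := by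
    intro t
    have hξ : ((t : ℂ) + ωp * I).im = ωp := by simp
    rw [← mul_sub, hcross _ hξ, mul_div_assoc', eq_div_iff (hne _ hξ)]
    linear_combination cexp (I * x * (t + ωp * I)) * Ghat (t + ωp * I) * hWH _ hξ
  obtain ⟨hint, heq⟩ := integrable_and_integral_eq_add_mul_of_sub_eq_mul hq hint₁ hint₂ hpoint
  refine ⟨hint, ?_⟩
  rw [heq]
  field_simp

/-- The analytic core of Theorem 5.2: the Laplace–Fourier representation (eq:LTFT)+(eq:LTFTpr)
of the no-touch option value `q⁻¹·F⁻¹[φ⁻·Π⁺_h(φ⁺·Ĝ)]`, obtained by crossing the pole at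
`η = ξ` and applying the Wiener–Hopf factorization `φ⁺·φ⁻·(q + ψ) = q`. -/
theorem stmt_15 (σm ωm ωp ωp' σp : ℝ)
    (h₁ : σm < ωm) (h₂ : ωm < ωp) (h₃ : ωp < ωp') (h₄ : ωp' < σp)
    (q : ℂ) (hq : q ≠ 0) (x h : ℝ)
    (φp Ghat : ℂ → ℂ) (C s : ℝ) (hC : 0 < C) (hs : 1 < s)
    (hφp : DifferentiableOn ℂ φp {z : ℂ | σm < z.im ∧ z.im < σp})
    (hGhat : DifferentiableOn ℂ Ghat {z : ℂ | σm < z.im ∧ z.im < σp})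
    (hbound : ∀ z : ℂ, σm < z.im → z.im < σp →
      ‖φp z * Ghat z‖ ≤ C * (1 + ‖z‖) ^ (-s))
    (φm ψ : ℂ → ℂ)
    (hφm : ContinuousOn φm {z : ℂ | z.im = ωp})
    (hψ : ContinuousOn ψ {z : ℂ | z.im = ωp})
    (hne : ∀ ξ : ℂ, ξ.im = ωp → q + ψ ξ ≠ 0)
    (hWH : ∀ ξ : ℂ, ξ.im = ωp → φp ξ * φm ξ * (q + ψ ξ) = q)
    (Iω : ℝ → ℂ → ℂ)
    (hI : ∀ (ω : ℝ) (ξ : ℂ), Iω ω ξ =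
      (2 * (Real.pi : ℂ) * Complex.I)⁻¹ *
        ∫ t : ℝ, Complex.exp (Complex.I * h * ((t : ℂ) + ω * Complex.I - ξ)) *
          φp ((t : ℂ) + ω * Complex.I) * Ghat ((t : ℂ) + ω * Complex.I) /
            (ξ - t - ω * Complex.I))
    (hint₁ : Integrable (fun t : ℝ =>
      Complex.exp (Complex.I * x * ((t : ℂ) + ωp * Complex.I)) *
        φm ((t : ℂ) + ωp * Complex.I) * Iω ωp' ((t : ℂ) + ωp * Complex.I)))
    (hint₂ : Integrable (fun t : ℝ =>
      Complex.exp (Complex.I * x * ((t : ℂ) + ωp * Complex.I)) *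
        φm ((t : ℂ) + ωp * Complex.I) * Iω ωm ((t : ℂ) + ωp * Complex.I))) :
    Integrable (fun t : ℝ =>
      Complex.exp (Complex.I * x * ((t : ℂ) + ωp * Complex.I)) *
        Ghat ((t : ℂ) + ωp * Complex.I) / (q + ψ ((t : ℂ) + ωp * Complex.I))) ∧
    (2 * (Real.pi : ℂ) * q)⁻¹ *
        (∫ t : ℝ, Complex.exp (Complex.I * x * ((t : ℂ) + ωp * Complex.I)) *
          φm ((t : ℂ) + ωp * Complex.I) * Iω ωp' ((t : ℂ) + ωp * Complex.I))
      = (2 * (Real.pi : ℂ) * q)⁻¹ *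
          (∫ t : ℝ, Complex.exp (Complex.I * x * ((t : ℂ) + ωp * Complex.I)) *
            φm ((t : ℂ) + ωp * Complex.I) * Iω ωm ((t : ℂ) + ωp * Complex.I))
        + (2 * (Real.pi : ℂ))⁻¹ *
            ∫ t : ℝ, Complex.exp (Complex.I * x * ((t : ℂ) + ωp * Complex.I)) *
              Ghat ((t : ℂ) + ωp * Complex.I) / (q + ψ ((t : ℂ) + ωp * Complex.I)) :=
  stmt_15_general σm ωm ωp ωp' σp h₁ h₂ h₃ h₄ q hq x h φp Ghat C s hs hφp hGhat hbound φm ψ hne hWH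
    Iω hI hint₁ hint₂
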